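/- Consider the multi-input system X(k+1) = A X(k) + B U(k), X(0) = 0, where A is substochastic nonnegative and B is a 0–1 matrix whose columns are distinct standard basis vectors indexing input nodes. Let C be a set of vertices, disjoint from the input nodes and from target q*, meeting every directed path in the digraph of A from any input node to q*, and assume self-weights a_{qq} < 1 on all such paths. Then the finite-horizon l_p gain satisfies G_p(q*, k_f) ≤ max_{c ∈ C} G_p(c, k_f) for every 1 ≤ p < ∞ and horizon k_f. -/
import Mathlib


/-- Zero-initial-state trajectory of the multi-input system
`X(k+1) = A X(k) + B U(k)`, where the columns of `B` are the standard basis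
vectors indexed by the (distinct) input nodes `inp j`. -/
def netTrajM {n m : ℕ} (A : Matrix (Fin n) (Fin n) ℝ) (inp : Fin m → Fin n)
    (U : ℕ → Fin m → ℝ) : ℕ → Fin n → ℝ
  | 0 => 0
  | k + 1 => A.mulVec (netTrajM A inp U k) +
      (fun i => ∑ j, if i = inp j then U k j else 0)

/-- A directed path of length `L` from `s` to `t` in the digraph of `A`. -/
def IsDirPath {n : ℕ} (A : Matrix (Fin n) (Fin n) ℝ) (s t : Fin n)
    (L : ℕ) (p : ℕ → Fin n) : Prop :=
  p 0 = s ∧ p L = t ∧ ∀ k < L, 0 < A (p (k + 1)) (p k)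

/-- Reachable from some input by a path avoiding `C`. -/
def ReachAvoid {n m : ℕ} (A : Matrix (Fin n) (Fin n) ℝ) (inp : Fin m → Fin n)
    (C : Finset (Fin n)) (v : Fin n) : Prop :=
  ∃ j L pa, IsDirPath A (inp j) v L pa ∧ ∀ k ≤ L, pa k ∉ C

lemma reach_inp {n m : ℕ} (A : Matrix (Fin n) (Fin n) ℝ) (inp : Fin m → Fin n)
    (C : Finset (Fin n)) (hCinp : ∀ j, inp j ∉ C) (j : Fin m) :
    ReachAvoid A inp C (inp j) := by
  refine ⟨j, 0, fun _ => inp j, ⟨rfl, rfl, fun k hk => absurd hk (Nat.not_lt_zero k)⟩,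
    fun k _ => hCinp j⟩

lemma reach_step {n m : ℕ} {A : Matrix (Fin n) (Fin n) ℝ} {inp : Fin m → Fin n}
    {C : Finset (Fin n)} {i v : Fin n} (hiC : i ∉ C) (hAiv : 0 < A i v)
    (hv : ReachAvoid A inp C v) : ReachAvoid A inp C i := by
  obtain ⟨j, L, pa, ⟨h0, hL, hstep⟩, havoid⟩ := hv
  refine ⟨j, L + 1, fun k => if k ≤ L then pa k else i, ⟨?_, ?_, ?_⟩, ?_⟩
  · show (if 0 ≤ L then pa 0 else i) = inp j
    rw [if_pos (Nat.zero_le L)]; exact h0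
  · show (if L + 1 ≤ L then pa (L+1) else i) = i
    rw [if_neg (by omega)]
  · intro k hk
    show 0 < A (if k + 1 ≤ L then pa (k+1) else i) (if k ≤ L then pa k else i)
    rcases Nat.lt_or_ge k L with h | h
    · rw [if_pos (Nat.succ_le_of_lt h), if_pos (Nat.le_of_lt h)]
      exact hstep k h
    · have hkL : k = L := Nat.le_antisymm (Nat.lt_succ_iff.mp hk) h
      subst hkL
      rw [if_neg (by omega), if_pos le_rfl, hL]
      exact hAiv
  · intro k hk
    show (if k ≤ L then pa k else i) ∉ C
    by_cases hkL : k ≤ L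
    · rw [if_pos hkL]; exact havoid k hkL
    · rw [if_neg hkL]; exact hiC

/-- Structural lemma: no edges from the C-avoiding reachable set into
its complement (outside C). -/
lemma no_edge {n m : ℕ} {A : Matrix (Fin n) (Fin n) ℝ} {inp : Fin m → Fin n}
    {C : Finset (Fin n)} (hA : ∀ i j, 0 ≤ A i j) {i v : Fin n} (hiC : i ∉ C)
    (hi : ¬ ReachAvoid A inp C i) (hv : ReachAvoid A inp C v) : A i v = 0 := by
  by_contra h
  exact hi (reach_step hiC (lt_of_le_of_ne (hA i v) (Ne.symm h)) hv)

lemma not_reach_qstar {n m : ℕ} {A : Matrix (Fin n) (Fin n) ℝ} {inp : Fin m → Fin n}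
    {C : Finset (Fin n)} {qstar : Fin n}
    (hcut : ∀ j : Fin m, ∀ L : ℕ, ∀ p : ℕ → Fin n,
      IsDirPath A (inp j) qstar L p → ∃ k ≤ L, p k ∈ C) :
    ¬ ReachAvoid A inp C qstar := by
  rintro ⟨j, L, pa, hpath, havoid⟩
  obtain ⟨k, hk, hkC⟩ := hcut j L pa hpath
  exact havoid k hk hkC

lemma not_reach_of_mem {n m : ℕ} {A : Matrix (Fin n) (Fin n) ℝ} {inp : Fin m → Fin n}
    {C : Finset (Fin n)} {c : Fin n} (hc : c ∈ C) : ¬ ReachAvoid A inp C c := by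
  rintro ⟨j, L, pa, ⟨_, hL, _⟩, havoid⟩
  exact havoid L le_rfl (hL ▸ hc)

lemma jensen_sub {ι : Type*} (t : Finset ι) (c v : ι → ℝ) (hc : ∀ i ∈ t, 0 ≤ c i)
    (hs : ∑ i ∈ t, c i ≤ 1) {p : ℝ} (hp : 1 ≤ p) :
    |∑ i ∈ t, c i * v i| ^ p ≤ ∑ i ∈ t, c i * |v i| ^ p := by
  have hp0 : (0:ℝ) < p := lt_of_lt_of_le one_pos hp
  set s := ∑ i ∈ t, c i with hsdef
  have hs0 : 0 ≤ s := Finset.sum_nonneg hc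
  have habs : |∑ i ∈ t, c i * v i| ≤ ∑ i ∈ t, c i * |v i| := by
    calc |∑ i ∈ t, c i * v i| ≤ ∑ i ∈ t, |c i * v i| := Finset.abs_sum_le_sum_abs _ _
    _ = ∑ i ∈ t, c i * |v i| := by
        apply Finset.sum_congr rfl
        intro i hi
        rw [abs_mul, abs_of_nonneg (hc i hi)]
  have h1 : |∑ i ∈ t, c i * v i| ^ p ≤ (∑ i ∈ t, c i * |v i|) ^ p :=
    Real.rpow_le_rpow (abs_nonneg _) habs hp0.le
  rcases eq_or_lt_of_le hs0 with h0 | h0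
  · have hall : ∀ i ∈ t, c i = 0 := by
      intro i hi
      exact (Finset.sum_eq_zero_iff_of_nonneg hc).1 h0.symm i hi
    have : ∑ i ∈ t, c i * |v i| = 0 := Finset.sum_eq_zero (fun i hi => by rw [hall i hi, zero_mul])
    refine le_trans h1 ?_
    rw [this, Real.zero_rpow hp0.ne']
    exact Finset.sum_nonneg (fun i hi => by rw [hall i hi, zero_mul])
  · have key := Real.rpow_arith_mean_le_arith_mean_rpow t (fun i => c i / s) (fun i => |v i|)
      (fun i hi => div_nonneg (hc i hi) hs0) (by
        rw [← Finset.sum_div, ← hsdef, div_self h0.ne']) (fun i _ => abs_nonneg _) hp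
    have e1 : ∑ i ∈ t, (c i / s) * |v i| = (∑ i ∈ t, c i * |v i|) / s := by
      rw [Finset.sum_div]; apply Finset.sum_congr rfl; intro i _; ring
    have e2 : ∑ i ∈ t, (c i / s) * |v i| ^ p = (∑ i ∈ t, c i * |v i| ^ p) / s := by
      rw [Finset.sum_div]; apply Finset.sum_congr rfl; intro i _; ring
    rw [e1, e2, Real.div_rpow (Finset.sum_nonneg (fun i hi => mul_nonneg (hc i hi) (abs_nonneg _))) hs0,
      div_le_div_iff₀ (Real.rpow_pos_of_pos h0 p) h0] at key
    refine le_trans h1 ?_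
    have hsp : s ^ p ≤ s := by
      calc s ^ p ≤ s ^ (1:ℝ) := Real.rpow_le_rpow_of_exponent_ge h0 hs hp
      _ = s := Real.rpow_one s
    have hnum : (∑ i ∈ t, c i * |v i|) ^ p * s ≤ (∑ i ∈ t, c i * |v i| ^ p) * s := by
      refine le_trans key ?_
      have hrhs0 : 0 ≤ ∑ i ∈ t, c i * |v i| ^ p :=
        Finset.sum_nonneg (fun i hi => mul_nonneg (hc i hi) (Real.rpow_nonneg (abs_nonneg _) _))
      exact mul_le_mul_of_nonneg_left hsp hrhs0
    exact le_of_mul_le_mul_right hnum h0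

lemma traj_bound {n m : ℕ} (A : Matrix (Fin n) (Fin n) ℝ)
    (hA : ∀ i j, 0 ≤ A i j) (hrow : ∀ i, ∑ j, A i j ≤ 1)
    (inp : Fin m → Fin n) (C : Finset (Fin n)) (hCne : C.Nonempty)
    (hCinp : ∀ j, inp j ∉ C) (U : ℕ → Fin m → ℝ) {p : ℝ} (hp : 1 ≤ p) (kf : ℕ) :
    ∀ K, K ≤ kf → ∀ i, ¬ ReachAvoid A inp C i →
      ∑ k ∈ Finset.range (K+1), |netTrajM A inp U k i| ^ p ≤
      C.sup' hCne (fun c => ∑ k ∈ Finset.range (kf+1), |netTrajM A inp U k c| ^ p) := by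
  have hp0 : (0:ℝ) < p := lt_of_lt_of_le one_pos hp
  set x := netTrajM A inp U with hx
  set V := C.sup' hCne (fun c => ∑ k ∈ Finset.range (kf+1), |x k c| ^ p) with hV
  have hx0 : ∀ i, x 0 i = 0 := fun i => rfl
  have hterm0 : ∀ i, |x 0 i| ^ p = 0 := by
    intro i; rw [hx0 i, abs_zero, Real.zero_rpow hp0.ne']
  have hV0 : 0 ≤ V := by
    obtain ⟨c, hc⟩ := hCne
    refine le_trans ?_ (Finset.le_sup' _ hc)
    exact Finset.sum_nonneg (fun k _ => Real.rpow_nonneg (abs_nonneg _) _)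
  have hmem : ∀ c ∈ C, ∀ K, K ≤ kf → ∑ k ∈ Finset.range (K+1), |x k c| ^ p ≤ V := by
    intro c hc K hK
    refine le_trans ?_ (Finset.le_sup' _ hc)
    apply Finset.sum_le_sum_of_subset_of_nonneg
    · exact Finset.range_subset_range.2 (by omega)
    · intro k _ _; exact Real.rpow_nonneg (abs_nonneg _) _
  intro K
  induction K with
  | zero =>
    intro _ i _
    rw [Finset.sum_range_one, hterm0 i]
    exact hV0
  | succ K ih =>
    intro hK i hi
    by_cases hiC : i ∈ C
    · exact hmem i hiC (K+1) hK
    · have hKkf : K ≤ kf := Nat.le_of_succ_le hK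
      have hne : ∀ j, i ≠ inp j := by
        intro j h
        exact hi (h ▸ reach_inp A inp C hCinp j)
      have hxs : ∀ k, x (k+1) i = ∑ j, A i j * x k j := by
        intro k
        show (A.mulVec (x k) + fun i => ∑ j, if i = inp j then U k j else 0) i = _
        rw [Pi.add_apply]
        have : (∑ j, if i = inp j then U k j else 0) = 0 :=
          Finset.sum_eq_zero (fun j _ => if_neg (hne j))
        rw [this, add_zero, Matrix.mulVec, dotProduct]
      have step : ∀ k, |x (k+1) i| ^ p ≤ ∑ j, A i j * |x k j| ^ p := by
        intro k
        rw [hxs k]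
        exact jensen_sub Finset.univ (A i) (x k) (fun j _ => hA i j) (hrow i) hp
      calc ∑ k ∈ Finset.range (K+2), |x k i| ^ p
          = (∑ k ∈ Finset.range (K+1), |x (k+1) i| ^ p) + |x 0 i| ^ p :=
            Finset.sum_range_succ' _ (K+1)
        _ = ∑ k ∈ Finset.range (K+1), |x (k+1) i| ^ p := by rw [hterm0 i, add_zero]
        _ ≤ ∑ k ∈ Finset.range (K+1), ∑ j, A i j * |x k j| ^ p :=
            Finset.sum_le_sum (fun k _ => step k)
        _ = ∑ j, A i j * ∑ k ∈ Finset.range (K+1), |x k j| ^ p := by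
            rw [Finset.sum_comm]
            exact Finset.sum_congr rfl (fun j _ => (Finset.mul_sum _ _ _).symm)
        _ ≤ ∑ j, A i j * V := by
            apply Finset.sum_le_sum
            intro j _
            by_cases hj : ReachAvoid A inp C j
            · rw [no_edge hA hiC hi hj, zero_mul, zero_mul]
            · exact mul_le_mul_of_nonneg_left (ih hKkf j hj) (hA i j)
        _ = (∑ j, A i j) * V := by rw [Finset.sum_mul]
        _ ≤ V := mul_le_of_le_one_left hV0 (hrow i)

lemma traj_abs_le {n m : ℕ} (A : Matrix (Fin n) (Fin n) ℝ)
    (hA : ∀ i j, 0 ≤ A i j) (hrow : ∀ i, ∑ j, A i j ≤ 1)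
    (inp : Fin m → Fin n) (U : ℕ → Fin m → ℝ) :
    ∀ K i, |netTrajM A inp U K i| ≤ ∑ k ∈ Finset.range K, ∑ j, |U k j| := by
  intro K
  induction K with
  | zero => intro i; simp [netTrajM]
  | succ K ih =>
    intro i
    set S := ∑ k ∈ Finset.range K, ∑ j, |U k j| with hS
    have hS0 : 0 ≤ S := Finset.sum_nonneg (fun k _ => Finset.sum_nonneg (fun j _ => abs_nonneg _))
    have hsplit : netTrajM A inp U (K+1) i =
        A.mulVec (netTrajM A inp U K) i + ∑ j, (if i = inp j then U K j else 0) := rfl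
    have h1 : |A.mulVec (netTrajM A inp U K) i| ≤ S := by
      rw [Matrix.mulVec, dotProduct]
      calc |∑ j, A i j * netTrajM A inp U K j| ≤ ∑ j, |A i j * netTrajM A inp U K j| :=
            Finset.abs_sum_le_sum_abs _ _
        _ = ∑ j, A i j * |netTrajM A inp U K j| := by
            refine Finset.sum_congr rfl (fun j _ => ?_)
            rw [abs_mul, abs_of_nonneg (hA i j)]
        _ ≤ ∑ j, A i j * S :=
            Finset.sum_le_sum (fun j _ => mul_le_mul_of_nonneg_left (ih j) (hA i j))
        _ = (∑ j, A i j) * S := by rw [Finset.sum_mul]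
        _ ≤ S := mul_le_of_le_one_left hS0 (hrow i)
    have h2 : |∑ j, (if i = inp j then U K j else 0)| ≤ ∑ j, |U K j| := by
      calc |∑ j, (if i = inp j then U K j else 0)| ≤ ∑ j, |if i = inp j then U K j else 0| :=
            Finset.abs_sum_le_sum_abs _ _
        _ ≤ ∑ j, |U K j| := by
            refine Finset.sum_le_sum (fun j _ => ?_)
            by_cases h : i = inp j
            · rw [if_pos h]
            · rw [if_neg h, abs_zero]; exact abs_nonneg _
    calc |netTrajM A inp U (K+1) i| ≤
        |A.mulVec (netTrajM A inp U K) i| + |∑ j, (if i = inp j then U K j else 0)| := by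
          rw [hsplit]; exact abs_add_le _ _
      _ ≤ S + ∑ j, |U K j| := add_le_add h1 h2
      _ = ∑ k ∈ Finset.range (K+1), ∑ j, |U k j| := (Finset.sum_range_succ _ K).symm

lemma gain_set_bdd {n m : ℕ} (A : Matrix (Fin n) (Fin n) ℝ)
    (hA : ∀ i j, 0 ≤ A i j) (hrow : ∀ i, ∑ j, A i j ≤ 1)
    (inp : Fin m → Fin n) (i : Fin n) {p : ℝ} (hp : 1 ≤ p) (kf : ℕ) :
    BddAbove {g : ℝ | ∃ U : ℕ → Fin m → ℝ,
      (∑ k ∈ Finset.range (kf + 1), ∑ j, |U k j| ^ p) ^ (1 / p) = 1 ∧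
      g = (∑ k ∈ Finset.range (kf + 1), |netTrajM A inp U k i| ^ p) ^ (1 / p)} := by
  have hp0 : (0:ℝ) < p := lt_of_lt_of_le one_pos hp
  refine ⟨(((kf:ℝ)+1) * ((((kf:ℝ)+1) * m)) ^ p) ^ (1/p), ?_⟩
  rintro g ⟨U, hnorm, rfl⟩
  -- energy = 1
  set E := ∑ k ∈ Finset.range (kf + 1), ∑ j, |U k j| ^ p with hE
  have hE0 : 0 ≤ E :=
    Finset.sum_nonneg (fun k _ => Finset.sum_nonneg (fun j _ => Real.rpow_nonneg (abs_nonneg _) _))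
  have hE1 : E = 1 := by
    have h := Real.rpow_mul hE0 (1/p) p
    rw [one_div_mul_cancel hp0.ne', Real.rpow_one] at h
    rw [h, hnorm, Real.one_rpow]
  -- each |U k j| ≤ 1
  have hU1 : ∀ k ∈ Finset.range (kf+1), ∀ j, |U k j| ≤ 1 := by
    intro k hk j
    have h1 : |U k j| ^ p ≤ E := by
      refine le_trans (Finset.single_le_sum (f := fun j => |U k j| ^ p)
        (fun j _ => Real.rpow_nonneg (abs_nonneg _) _) (Finset.mem_univ j)) ?_
      exact Finset.single_le_sum (f := fun k => ∑ j, |U k j| ^ p)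
        (fun k _ => Finset.sum_nonneg (fun j _ => Real.rpow_nonneg (abs_nonneg _) _)) hk
    rw [hE1] at h1
    by_contra hgt
    push_neg at hgt
    have : (1:ℝ) ^ p < |U k j| ^ p := Real.rpow_lt_rpow (by norm_num) hgt hp0
    rw [Real.one_rpow] at this
    linarith
  -- each |x k i| ≤ (kf+1)*m
  have hx : ∀ k ∈ Finset.range (kf+1), |netTrajM A inp U k i| ≤ ((kf:ℝ)+1) * m := by
    intro k hk
    refine le_trans (traj_abs_le A hA hrow inp U k i) ?_
    calc ∑ k' ∈ Finset.range k, ∑ j, |U k' j| ≤ ∑ k' ∈ Finset.range (kf+1), ∑ j, |U k' j| := by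
          apply Finset.sum_le_sum_of_subset_of_nonneg
          · exact Finset.range_subset_range.2 (by simp at hk; omega)
          · intro k' _ _; exact Finset.sum_nonneg (fun j _ => abs_nonneg _)
      _ ≤ ∑ k' ∈ Finset.range (kf+1), ∑ j : Fin m, (1:ℝ) := by
          refine Finset.sum_le_sum (fun k' hk' => Finset.sum_le_sum (fun j _ => hU1 k' hk' j))
      _ = ((kf:ℝ)+1) * m := by simp [mul_comm]
  -- sum bound
  have hsum : ∑ k ∈ Finset.range (kf+1), |netTrajM A inp U k i| ^ p ≤
      ((kf:ℝ)+1) * ((((kf:ℝ)+1) * m)) ^ p := by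
    have hMp : ∀ k ∈ Finset.range (kf+1), |netTrajM A inp U k i| ^ p ≤ ((((kf:ℝ)+1) * m)) ^ p :=
      fun k hk => Real.rpow_le_rpow (abs_nonneg _) (hx k hk) hp0.le
    calc ∑ k ∈ Finset.range (kf+1), |netTrajM A inp U k i| ^ p
        ≤ ∑ k ∈ Finset.range (kf+1), ((((kf:ℝ)+1) * m)) ^ p := Finset.sum_le_sum hMp
      _ = ((kf:ℝ)+1) * ((((kf:ℝ)+1) * m)) ^ p := by
          rw [Finset.sum_const, Finset.card_range, nsmul_eq_mul]; push_cast; ring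
  exact Real.rpow_le_rpow (Finset.sum_nonneg (fun k _ => Real.rpow_nonneg (abs_nonneg _) _))
    hsum (by positivity)

/-- Finite-horizon multi-input `l_p` gain from the inputs to the output at node `i`. -/
noncomputable def lpGainM {n m : ℕ} (A : Matrix (Fin n) (Fin n) ℝ)
    (inp : Fin m → Fin n) (i : Fin n) (p : ℝ) (kf : ℕ) : ℝ :=
  sSup {g : ℝ | ∃ U : ℕ → Fin m → ℝ,
    (∑ k ∈ Finset.range (kf + 1), ∑ j, |U k j| ^ p) ^ (1 / p) = 1 ∧
    g = (∑ k ∈ Finset.range (kf + 1), |netTrajM A inp U k i| ^ p) ^ (1 / p)}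

/-- Multi-input cutset bound on finite-horizon `l_p` gains:
if `C` (disjoint from the input nodes and from `q*`) meets every directed path
from any input node to `q*`, and self-weights are `< 1` on all such paths, then
`G_p(q*, k_f) ≤ max_{c ∈ C} G_p(c, k_f)` for every `1 ≤ p < ∞`. -/
theorem lp_gain_cutset_bound_multi_input {n m : ℕ}
    (A : Matrix (Fin n) (Fin n) ℝ)
    (hA : ∀ i j, 0 ≤ A i j) (hrow : ∀ i, ∑ j, A i j ≤ 1)
    (inp : Fin m → Fin n) (hinj : Function.Injective inp)
    (qstar : Fin n) (hq : ∀ j, qstar ≠ inp j)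
    (C : Finset (Fin n)) (hCne : C.Nonempty)
    (hCinp : ∀ j, inp j ∉ C) (hqC : qstar ∉ C)
    (hcut : ∀ j : Fin m, ∀ L : ℕ, ∀ p : ℕ → Fin n,
      IsDirPath A (inp j) qstar L p → ∃ k ≤ L, p k ∈ C)
    (hself : ∀ q : Fin n, (∀ j, q ≠ inp j) →
      (∃ j : Fin m, ∃ L : ℕ, ∃ pa : ℕ → Fin n,
        IsDirPath A (inp j) qstar L pa ∧ ∃ k ≤ L, pa k = q) →
      A q q < 1)
    (p : ℝ) (hp : 1 ≤ p) (kf : ℕ) :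
    lpGainM A inp qstar p kf ≤ C.sup' hCne (fun c => lpGainM A inp c p kf) := by
  have hp0 : (0:ℝ) < p := lt_of_lt_of_le one_pos hp
  set B := C.sup' hCne (fun c => lpGainM A inp c p kf) with hB
  have hgain0 : ∀ i : Fin n, 0 ≤ lpGainM A inp i p kf := by
    intro i
    apply Real.sSup_nonneg
    rintro g ⟨U, _, rfl⟩
    exact Real.rpow_nonneg
      (Finset.sum_nonneg (fun k _ => Real.rpow_nonneg (abs_nonneg _) _)) _
  have hB0 : 0 ≤ B := by
    obtain ⟨c, hc⟩ := hCne
    exact le_trans (hgain0 c) (Finset.le_sup' (fun c => lpGainM A inp c p kf) hc)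
  apply Real.sSup_le _ hB0
  rintro g ⟨U, hnorm, rfl⟩
  -- pointwise bound
  set sfun : Fin n → ℝ := fun i => ∑ k ∈ Finset.range (kf+1), |netTrajM A inp U k i| ^ p
    with hsfun
  obtain ⟨c0, hc0, hVeq⟩ := Finset.exists_mem_eq_sup' hCne sfun
  have hbound : sfun qstar ≤ sfun c0 := by
    rw [← hVeq]
    exact traj_bound A hA hrow inp C hCne hCinp U hp kf kf le_rfl qstar
      (not_reach_qstar hcut)
  have hs0 : 0 ≤ sfun qstar :=
    Finset.sum_nonneg (fun k _ => Real.rpow_nonneg (abs_nonneg _) _)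
  have h1 : (sfun qstar) ^ (1/p) ≤ (sfun c0) ^ (1/p) :=
    Real.rpow_le_rpow hs0 hbound (by positivity)
  have h2 : (sfun c0) ^ (1/p) ≤ lpGainM A inp c0 p kf := by
    apply le_csSup (gain_set_bdd A hA hrow inp c0 hp kf)
    exact ⟨U, hnorm, rfl⟩
  exact le_trans h1 (le_trans h2 (Finset.le_sup' (fun c => lpGainM A inp c p kf) hc0))
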